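/- arXiv:2501.00618 — 4 statements merged into one kernel-verified Lean document; each statement's English description precedes it below -/
import Mathlib

section
/- In an election with n candidates where every ballot is a complete ranking, the standard Borda count (assigning n−i+1 points to the candidate ranked i-th) never elects a Condorcet loser: if a candidate loses every pairwise majority comparison against every other candidate, then that candidate does not have the strictly largest Borda score. -/
/- A complete ballot on `n` candidates is a bijection candidate ↦ rank (0-indexed:
rank 0 is first place). The standard Borda count gives the candidate ranked `i`
(0-indexed) `n - i` points, i.e. `n - i + 1` points for the 1-indexed rank `i + 1`. -/

/-- Borda score of candidate `c`. -/
def bordaScore {n : ℕ} (ballots : Multiset (Fin n ≃ Fin n)) (c : Fin n) : ℕ :=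
  (ballots.map (fun b => n - (b c : ℕ))).sum

open Finset

lemma ballot_points {n : ℕ} (b : Fin n ≃ Fin n) (X : Fin n) (hn : 1 ≤ n) :
    n - (b X : ℕ) = 1 + ∑ Y ∈ Finset.univ.erase X, (if b X < b Y then 1 else 0) := by
  have h1 : ∑ Y ∈ Finset.univ.erase X, (if b X < b Y then 1 else 0)
      = ((Finset.univ.erase X).filter (fun Y => b X < b Y)).card := by
    rw [Finset.card_filter]
  have h2 : (Finset.univ.erase X).filter (fun Y => b X < b Y)
      = (Finset.Ioi (b X)).map b.symm.toEmbedding := by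
    ext Y
    simp only [Finset.mem_filter, Finset.mem_erase, Finset.mem_univ, Finset.mem_map,
      Finset.mem_Ioi, Equiv.coe_toEmbedding]
    constructor
    · rintro ⟨hne, hlt⟩
      exact ⟨b Y, hlt, b.symm_apply_apply Y⟩
    · rintro ⟨z, hz, rfl⟩
      refine ⟨⟨?_, trivial⟩, by simpa using hz⟩
      intro h
      rw [← h, Equiv.apply_symm_apply] at hz
      exact lt_irrefl _ hz
  have h3 : (b X : ℕ) ≤ n - 1 := Nat.le_sub_one_of_lt (b X).isLt
  rw [h1, h2, Finset.card_map, Fin.card_Ioi]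
  omega

lemma score_eq {n : ℕ} (s : Multiset (Fin n ≃ Fin n)) (X : Fin n) (hn : 1 ≤ n) :
    bordaScore s X = Multiset.card s
      + ∑ Y ∈ Finset.univ.erase X, Multiset.card (s.filter (fun b => b X < b Y)) := by
  induction s using Multiset.induction with
  | empty => simp [bordaScore]
  | cons b s ih =>
    have hcard : ∀ Y, Multiset.card ((b ::ₘ s).filter (fun c => c X < c Y))
        = (if b X < b Y then 1 else 0) + Multiset.card (s.filter (fun c => c X < c Y)) := by
      intro Y
      rw [Multiset.filter_cons]
      split <;> simp [Nat.add_comm]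
    simp only [bordaScore, Multiset.map_cons, Multiset.sum_cons, Multiset.card_cons] at *
    rw [ballot_points b X hn]
    simp only [hcard]
    rw [Finset.sum_add_distrib]
    omega

lemma wins_add {n : ℕ} (s : Multiset (Fin n ≃ Fin n)) {X Y : Fin n} (hXY : X ≠ Y) :
    Multiset.card (s.filter (fun b => b X < b Y))
      + Multiset.card (s.filter (fun b => b Y < b X)) = Multiset.card s := by
  have : (s.filter (fun b => b Y < b X)) = s.filter (fun b => ¬ b X < b Y) := by
    apply Multiset.filter_congr
    intro b _
    have hne : b X ≠ b Y := fun h => hXY (b.injective h)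
    constructor
    · intro h; exact not_lt.mpr (le_of_lt h)
    · intro h; exact lt_of_le_of_ne (not_lt.mp h) (Ne.symm hne)
  rw [this, ← Multiset.card_add, Multiset.filter_add_not]

/-- **Borda never elects a Condorcet loser** (complete ballots): if `A` loses every
pairwise majority comparison, then `A` does not have the strictly largest Borda score. -/
theorem borda_no_condorcet_loser {n : ℕ} (hn : 2 ≤ n)
    (ballots : Multiset (Fin n ≃ Fin n)) (A : Fin n)
    (hCL : ∀ B : Fin n, B ≠ A →
      (ballots.filter (fun b => b B < b A)).card >
      (ballots.filter (fun b => b A < b B)).card) :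
    ¬ (∀ B : Fin n, B ≠ A → bordaScore ballots B < bordaScore ballots A) := by
  intro H
  have hn1 : 1 ≤ n := by omega
  set m := Multiset.card ballots with hm
  set w : Fin n → Fin n → ℕ := fun X Y => Multiset.card (ballots.filter (fun b => b X < b Y)) with hw
  set E := Finset.univ.erase A with hE
  have hEcard : E.card = n - 1 := by
    simp [hE, Finset.card_erase_of_mem]
  set k := n - 1 with hk
  have hk1 : 1 ≤ k := by omega
  -- scores
  have hscore : ∀ X : Fin n, bordaScore ballots X = m + ∑ Y ∈ Finset.univ.erase X, w X Y :=
    fun X => score_eq ballots X hn1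
  -- sum over B ∈ E of score with inner split
  set SA := ∑ B ∈ E, w A B with hSA
  set WA := ∑ B ∈ E, w B A with hWA
  set S := ∑ B ∈ E, ∑ C ∈ E.erase B, w B C with hS
  have hsplit : ∀ B ∈ E, ∑ Y ∈ Finset.univ.erase B, w B Y = w B A + ∑ C ∈ E.erase B, w B C := by
    intro B hB
    have hBA : B ≠ A := (Finset.mem_erase.mp hB).1
    have hA : A ∈ Finset.univ.erase B := Finset.mem_erase.mpr ⟨hBA.symm, Finset.mem_univ A⟩
    rw [← Finset.add_sum_erase _ _ hA]
    congr 1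
    rw [hE, Finset.erase_right_comm]
  have hsumscore : ∑ B ∈ E, bordaScore ballots B = k * m + WA + S := by
    calc ∑ B ∈ E, bordaScore ballots B
        = ∑ B ∈ E, (m + (w B A + ∑ C ∈ E.erase B, w B C)) := by
          apply Finset.sum_congr rfl
          intro B hB
          rw [hscore B, hsplit B hB]
      _ = k * m + WA + S := by
          simp only [Finset.sum_add_distrib, Finset.sum_const, smul_eq_mul, hEcard, ← hk]
          ring
  -- 2S = k(k-1)m
  have hswap : S = ∑ C ∈ E, ∑ B ∈ E.erase C, w B C := by
    rw [hS]
    rw [Finset.sum_sigma', Finset.sum_sigma']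
    apply Finset.sum_nbij' (fun p => ⟨p.2, p.1⟩) (fun p => ⟨p.2, p.1⟩) <;>
      simp +contextual [Finset.mem_sigma, Finset.mem_erase, eq_comm]
  have h2S : 2 * S = k * ((k - 1) * m) := by
    have hdouble : S + S = ∑ B ∈ E, ∑ C ∈ E.erase B, (w B C + w C B) := by
      simp only [Finset.sum_add_distrib]
      rw [← hS, ← hswap]
    have hinner : ∀ B ∈ E, ∑ C ∈ E.erase B, (w B C + w C B) = (k - 1) * m := by
      intro B hB
      have : ∀ C ∈ E.erase B, w B C + w C B = m := by
        intro C hC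
        exact wins_add ballots (Finset.mem_erase.mp hC).1.symm
      rw [Finset.sum_congr rfl this, Finset.sum_const, smul_eq_mul,
        Finset.card_erase_of_mem hB, hEcard]
    rw [two_mul, hdouble, Finset.sum_congr rfl hinner, Finset.sum_const, smul_eq_mul, hEcard]
  -- main inequalities
  have f1 : (∑ B ∈ E, bordaScore ballots B) + k ≤ k * bordaScore ballots A := by
    have : ∑ B ∈ E, (bordaScore ballots B + 1) ≤ ∑ B ∈ E, bordaScore ballots A :=
      Finset.sum_le_sum (fun B hB => H B (Finset.mem_erase.mp hB).1)
    simpa [Finset.sum_add_distrib, hEcard, mul_comm] using this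
  have f2 : bordaScore ballots A = m + SA := hscore A
  have f4 : SA + k ≤ WA := by
    have : ∑ B ∈ E, (w A B + 1) ≤ ∑ B ∈ E, w B A :=
      Finset.sum_le_sum (fun B hB => hCL B (Finset.mem_erase.mp hB).1)
    simpa [Finset.sum_add_distrib, hEcard] using this
  have f5 : 2 * SA + k ≤ k * m := by
    have step : ∀ B ∈ E, 2 * w A B + 1 ≤ m := by
      intro B hB
      have h1 := hCL B (Finset.mem_erase.mp hB).1
      have h2 := wins_add ballots (show A ≠ B from fun h => (Finset.mem_erase.mp hB).1 h.symm)
      simp only [hw]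
      omega
    calc 2 * SA + k = ∑ B ∈ E, (2 * w A B + 1) := by
          rw [hSA, Finset.mul_sum, Finset.sum_add_distrib, Finset.sum_const, hEcard,
            smul_eq_mul, mul_one]
      _ ≤ ∑ B ∈ E, m := Finset.sum_le_sum step
      _ = k * m := by rw [Finset.sum_const, hEcard, smul_eq_mul]
  -- conclude
  rw [f2, hsumscore] at f1
  clear_value m SA WA S k
  obtain ⟨k', rfl⟩ : ∃ k', k = k' + 1 := ⟨k - 1, by omega⟩
  simp only [Nat.add_sub_cancel] at h2S
  nlinarith [f1, f4, f5, h2S, Nat.mul_le_mul_left k' f5]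
end

section
/- In an election with n candidates where every ballot is a complete ranking, the standard Borda count never exhibits a majority loser failure: if a candidate is ranked last on strictly more than half of the ballots, then that candidate does not have the strictly largest Borda score. -/
private lemma sum_filter_le_aux {α : Type*} (f : α → ℕ) (p : α → Prop) [DecidablePred p]
    (k N : ℕ) (h : ∀ a, f a + (if p a then k else 0) ≤ N) (s : Multiset α) :
    (s.map f).sum + (s.filter p).card * k ≤ s.card * N := by
  induction s using Multiset.induction_on with
  | empty => simp
  | cons b s ih =>
    rw [Multiset.map_cons, Multiset.sum_cons, Multiset.filter_cons, Multiset.card_cons]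
    have hb := h b
    by_cases hpb : p b
    · rw [if_pos hpb] at hb
      simp only [hpb, if_pos, Multiset.card_add, Multiset.card_singleton]
      nlinarith [ih]
    · rw [if_neg hpb] at hb
      simp only [hpb, if_neg, not_false_iff, zero_add]
      nlinarith [ih]

private lemma total_sum_aux {n : ℕ} (ballots : Multiset (Fin n ≃ Fin n)) :
    ∑ B : Fin n, bordaScore ballots B = ballots.card * ∑ i : Fin n, (n - (i : ℕ)) := by
  unfold bordaScore
  induction ballots using Multiset.induction_on with
  | empty => simp
  | cons b s ih =>
    simp only [Multiset.map_cons, Multiset.sum_cons, Multiset.card_cons,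
      Finset.sum_add_distrib, ih]
    rw [Equiv.sum_comp b (fun i : Fin n => n - (i : ℕ))]
    ring

private lemma gauss_aux (n : ℕ) : 2 * ∑ i ∈ Finset.range n, (n - i) = n * (n + 1) := by
  induction n with
  | zero => simp
  | succ k ih =>
    rw [Finset.sum_range_succ']
    simp only [Nat.succ_sub_succ, Nat.sub_zero]
    rw [Nat.mul_add, ih]
    ring

/-- **Borda never exhibits a majority loser failure** (complete ballots): a candidate
ranked last on strictly more than half of the ballots does not have the strictly
largest Borda score. -/
theorem borda_no_majority_loser {n : ℕ} (hn : 2 ≤ n)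
    (ballots : Multiset (Fin n ≃ Fin n)) (A : Fin n)
    (hML : 2 * (ballots.filter (fun b => (b A : ℕ) = n - 1)).card > ballots.card) :
    ¬ (∀ B : Fin n, B ≠ A → bordaScore ballots B < bordaScore ballots A) := by
  intro hall
  obtain ⟨k, rfl⟩ : ∃ k, n = k + 2 := ⟨n - 2, by omega⟩
  set m := ballots.card with hm
  set L := (ballots.filter (fun b => (b A : ℕ) = k + 2 - 1)).card with hL
  set S := bordaScore ballots A with hS
  -- (1) per-ballot bound: S + L*(n-1) ≤ m*n
  have h1 : S + L * (k + 1) ≤ m * (k + 2) := by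
    have := sum_filter_le_aux (fun b : Fin (k+2) ≃ Fin (k+2) => (k + 2) - (b A : ℕ))
      (fun b => (b A : ℕ) = k + 2 - 1) (k + 1) (k + 2)
      (by
        intro b
        have hb := (b A).isLt
        by_cases hba : (b A : ℕ) = k + 2 - 1
        · rw [if_pos hba]
          show k + 2 - (b A : ℕ) + (k + 1) ≤ k + 2
          omega
        · rw [if_neg hba]
          show k + 2 - (b A : ℕ) + 0 ≤ k + 2
          omega) ballots
    exact this
  -- (2) total of all Borda scores
  have h2 : 2 * ∑ B : Fin (k+2), bordaScore ballots B = m * ((k + 2) * (k + 3)) := by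
    rw [total_sum_aux ballots, Fin.sum_univ_eq_sum_range (fun i => (k + 2) - i)]
    rw [← Nat.mul_assoc, Nat.mul_comm 2 m, Nat.mul_assoc, gauss_aux]
  -- S ≥ 1
  obtain ⟨B0, hB0⟩ := Fintype.exists_ne_of_one_lt_card (by simp) A
  have hS1 : 1 ≤ S := by have := hall B0 hB0; omega
  obtain ⟨s, hs⟩ : ∃ s, S = s + 1 := ⟨S - 1, by omega⟩
  -- (3) winner bound: T + (n-1) ≤ n*S
  have h3 : ∑ B : Fin (k+2), bordaScore ballots B + (k + 1) ≤ (k + 2) * S := by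
    have hmem : A ∈ (Finset.univ : Finset (Fin (k+2))) := Finset.mem_univ A
    rw [← Finset.sum_erase_add _ _ hmem]
    have hb : ∀ B ∈ Finset.univ.erase A, bordaScore ballots B ≤ s := by
      intro B hB
      have := hall B (Finset.ne_of_mem_erase hB)
      omega
    have hsum := Finset.sum_le_card_nsmul _ _ _ hb
    have hcard : ((Finset.univ : Finset (Fin (k+2))).erase A).card = k + 1 := by
      rw [Finset.card_erase_of_mem hmem, Finset.card_univ, Fintype.card_fin]
      omega
    rw [hcard, smul_eq_mul] at hsum
    rw [hs]
    nlinarith [hsum]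
  have hML' : m + 1 ≤ 2 * L := by omega
  nlinarith [h1, h2, h3, hML', mul_le_mul_right h1 (2 * (k + 2)),
    mul_le_mul_right hML' ((k + 1) * (k + 2))]
end

section
/- Any positional scoring method satisfies the participation criterion (no no-show paradox): if candidate A has maximal total score in an election, then adding a ballot that ranks A first cannot cause A to lose maximality; equivalently, if A is a winner with an additional ballot ranking A first removed, adding that ballot keeps A a winner. -/
/- Complete ballots are bijections candidate ↦ rank (0-indexed; rank 0 = first).
A positional scoring method is given by a weakly decreasing points vector. -/

/-- Total positional score of candidate `c` under points vector `p`. -/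
def posScore {n : ℕ} (p : Fin n → ℚ) (ballots : Multiset (Fin n ≃ Fin n)) (c : Fin n) : ℚ :=
  (ballots.map (fun b => p (b c))).sum

/-- **Positional scoring methods satisfy participation (no no-show paradox)**:
if `A` has maximal score, then adding a ballot `b₀` ranking `A` first keeps `A`
maximal. -/
theorem positional_scoring_participation {n : ℕ} (p : Fin n → ℚ)
    (hp : ∀ i j : Fin n, i ≤ j → p j ≤ p i)
    (ballots : Multiset (Fin n ≃ Fin n)) (A : Fin n)
    (b₀ : Fin n ≃ Fin n) (hb₀ : (b₀ A : ℕ) = 0)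
    (hwin : ∀ c : Fin n, posScore p ballots c ≤ posScore p ballots A) :
    ∀ c : Fin n, posScore p (b₀ ::ₘ ballots) c ≤ posScore p (b₀ ::ₘ ballots) A := by
  intro c
  simp only [posScore, Multiset.map_cons, Multiset.sum_cons]
  have h1 : p (b₀ c) ≤ p (b₀ A) := by
    apply hp
    exact Fin.le_def.mpr (by omega)
  exact add_le_add h1 (hwin c)
end

section
/- The modified Borda count never exhibits a majority loser failure: in any election with possibly partial ballots on n candidates, if candidate A is ranked last (i.e., ranked n-th on a complete ballot) on strictly more than half of all ballots, then A does not have the strictly largest MBC score. -/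
/-!
A ballot ranking `k` of the `n` candidates hands out `1 + ⋯ + k = k(k+1)/2` points, of which a
single candidate receives at most `k`; since `(n-k)(n-k-1) ≥ 0`, this gives
`2n · (points of A) ≤ k(k+1) + n(n-1)`. On a complete ballot with `A` last, `A` receives a single
point and the same inequality holds with a surplus of `n(n-1)` on the other side. If `A` is last
on at least half of the ballots, the surpluses pay for the defects, so summing over the ballots
gives `n · score A ≤ ∑ c, score c`: `A` scores at most the average, hence not strictly more than
every other candidate.
-/

/- A (possibly partial) ballot on `n` candidates is a duplicate-free nonempty list of
the ranked candidates in order of preference (head = first choice).  The modified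
Borda count (MBC) awards points (k, k-1, ..., 1) to the k ranked candidates and 0 to
unranked candidates: the candidate at 0-indexed position i of a ballot of length k
receives k - i points. -/

/-- MBC score of candidate `c`. -/
def mbcScore (n : ℕ) (ballots : Multiset (List (Fin n))) (c : Fin n) : ℕ :=
  (ballots.map (fun l => if c ∈ l then l.length - l.idxOf c else 0)).sum

namespace List

variable {α : Type*} [DecidableEq α]

def mbcPoints (l : List α) (c : α) : ℕ :=
  if c ∈ l then l.length - l.idxOf c else 0

theorem mbcPoints_nil (c : α) : mbcPoints [] c = 0 := by
  simp [mbcPoints]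

theorem mbcPoints_cons (a : α) (l : List α) (c : α) :
    mbcPoints (a :: l) c = if c = a then l.length + 1 else mbcPoints l c := by
  by_cases hca : c = a
  · simp [mbcPoints, hca]
  · simp [mbcPoints, hca, idxOf_cons_ne _ (Ne.symm hca)]

theorem mbcPoints_le_length (l : List α) (c : α) : mbcPoints l c ≤ l.length := by
  unfold mbcPoints
  split <;> omega

theorem mbcPoints_eq_one_of_getLast?_eq_some {l : List α} {a : α} (hl : l.Nodup)
    (ha : l.getLast? = some a) : mbcPoints l a = 1 := by
  obtain ⟨l', rfl⟩ := getLast?_eq_some_iff.mp ha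
  have ha' : a ∉ l' := ((nodup_append.mp hl).2.2 a · a (mem_singleton_self a) rfl)
  simp [mbcPoints, idxOf_append_of_notMem ha']

variable [Fintype α]

theorem two_mul_sum_mbcPoints {l : List α} (hl : l.Nodup) :
    2 * ∑ c, mbcPoints l c = l.length * (l.length + 1) := by
  induction l with
  | nil => simp [mbcPoints_nil]
  | cons a l ih =>
    obtain ⟨ha, hl⟩ := nodup_cons.mp hl
    have hsplit :
        ∀ c, mbcPoints (a :: l) c = mbcPoints l c + if c = a then l.length + 1 else 0 := by
      intro c
      rw [mbcPoints_cons]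
      split_ifs with hca
      · simp [mbcPoints, hca, ha]
      · simp
    simp only [hsplit, Finset.sum_add_distrib, Finset.sum_ite_eq', Finset.mem_univ, if_true,
      length_cons]
    rw [mul_add, ih hl]
    ring

theorem two_mul_card_mul_mbcPoints_le {l : List α} (hl : l.Nodup) (c : α) :
    2 * Fintype.card α * mbcPoints l c ≤
      2 * ∑ b, mbcPoints l b + Fintype.card α * (Fintype.card α - 1) := by
  have hc := mbcPoints_le_length l c
  have hk := hl.length_le_card
  rw [two_mul_sum_mbcPoints hl]
  rcases Nat.eq_zero_or_pos (Fintype.card α) with h0 | hpos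
  · simp_all
  · zify [hpos]
    nlinarith [Int.le_self_sq ((Fintype.card α : ℤ) - l.length)]

theorem two_mul_card_mul_mbcPoints_add_eq {l : List α} (hl : l.Nodup) {a : α}
    (hlen : l.length = Fintype.card α) (ha : l.getLast? = some a) :
    2 * Fintype.card α * mbcPoints l a + Fintype.card α * (Fintype.card α - 1) =
      2 * ∑ b, mbcPoints l b := by
  rw [two_mul_sum_mbcPoints hl, mbcPoints_eq_one_of_getLast?_eq_some hl ha, hlen]
  cases Fintype.card α with
  | zero => rfl
  | succ m => simp only [Nat.add_sub_cancel]; ring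

end List

theorem Multiset.sum_map_add_card_nsmul_le {ι M : Type*} [AddCommMonoid M] [PartialOrder M]
    [IsOrderedAddMonoid M] {s : Multiset ι} {f g : ι → M} {a b : M}
    (h : ∀ i ∈ s, f i + a ≤ g i + b) :
    (s.map f).sum + card s • a ≤ (s.map g).sum + card s • b := by
  simpa [Multiset.sum_map_add] using Multiset.sum_map_le_sum_map _ _ h

theorem Finset.exists_ne_le_of_card_nsmul_le_sum {ι M : Type*} [Fintype ι] [DecidableEq ι]
    [AddCommMonoid M] [LinearOrder M] [IsOrderedCancelAddMonoid M] {f : ι → M} {a : ι}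
    (hcard : 1 < Fintype.card ι) (h : Fintype.card ι • f a ≤ ∑ i, f i) :
    ∃ b ≠ a, f a ≤ f b := by
  obtain ⟨c, hc⟩ := Fintype.exists_ne_of_one_lt_card hcard a
  have hsum : ∑ _i ∈ univ.erase a, f a ≤ ∑ i ∈ univ.erase a, f i := by
    rw [sum_const, card_erase_of_mem (mem_univ a), card_univ]
    rw [← add_sum_erase _ _ (mem_univ a), ← Nat.sub_add_cancel hcard.le, succ_nsmul'] at h
    exact le_of_add_le_add_left h
  obtain ⟨b, hb, hab⟩ := exists_le_of_sum_le ⟨c, mem_erase.mpr ⟨hc, mem_univ c⟩⟩ hsum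
  exact ⟨b, ne_of_mem_erase hb, hab⟩

theorem mbcScore_eq_sum_map_mbcPoints (n : ℕ) (ballots : Multiset (List (Fin n))) (c : Fin n) :
    mbcScore n ballots c = (ballots.map (·.mbcPoints c)).sum :=
  rfl

theorem card_mul_mbcScore_le_sum_mbcScore {n : ℕ} {ballots : Multiset (List (Fin n))}
    (hnodup : ∀ l ∈ ballots, l.Nodup) {A : Fin n}
    (hmaj : ballots.card ≤
      2 * (ballots.filter fun l => l.length = n ∧ l.getLast? = some A).card) :
    n * mbcScore n ballots A ≤ ∑ c, mbcScore n ballots c := by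
  set p : List (Fin n) → Prop := fun l => l.length = n ∧ l.getLast? = some A
  set L := ballots.filter p
  set R := ballots.filter fun l => ¬p l
  set f : List (Fin n) → ℕ := fun l => 2 * n * l.mbcPoints A
  set g : List (Fin n) → ℕ := fun l => 2 * ∑ c, l.mbcPoints c
  have hL : (L.map f).sum + L.card * (n * (n - 1)) ≤ (L.map g).sum + L.card * 0 := by
    refine Multiset.sum_map_add_card_nsmul_le fun l hl => ?_
    obtain ⟨hl, hlen, hlast⟩ := Multiset.mem_filter.mp hl
    have := List.two_mul_card_mul_mbcPoints_add_eq (hnodup l hl)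
      (hlen.trans (Fintype.card_fin n).symm) hlast
    simp only [Fintype.card_fin] at this
    simp only [f, g]
    omega
  have hR : (R.map f).sum + R.card * 0 ≤ (R.map g).sum + R.card * (n * (n - 1)) := by
    refine Multiset.sum_map_add_card_nsmul_le fun l hl => ?_
    have := List.two_mul_card_mul_mbcPoints_le (hnodup l (Multiset.mem_of_mem_filter hl)) A
    simp only [Fintype.card_fin] at this
    simp only [f, g]
    omega
  have hsplit : ∀ h : List (Fin n) → ℕ, (ballots.map h).sum = (L.map h).sum + (R.map h).sum :=
    fun h => by rw [← Multiset.sum_add, ← Multiset.map_add, Multiset.filter_add_not]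
  have hRL : R.card * (n * (n - 1)) ≤ L.card * (n * (n - 1)) := by
    have hcard : L.card + R.card = ballots.card := by
      rw [← Multiset.card_add, Multiset.filter_add_not]
    exact Nat.mul_le_mul_right _ (by omega)
  have hfg : (ballots.map f).sum ≤ (ballots.map g).sum := by
    rw [hsplit f, hsplit g]
    omega
  have htotal : ∑ c, mbcScore n ballots c = (ballots.map fun l => ∑ c, l.mbcPoints c).sum :=
    (Multiset.sum_map_sum_map _ _).symm
  simp only [f, g, mul_assoc, Multiset.sum_map_mul_left] at hfg
  rw [htotal, mbcScore_eq_sum_map_mbcPoints]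
  omega

/-- **MBC never exhibits a majority loser failure**: if `A` is ranked last (i.e. in
the final position of a complete ballot) on strictly more than half of all ballots,
then `A` does not have the strictly largest MBC score. -/
theorem mbc_no_majority_loser (n : ℕ) (hn : 2 ≤ n)
    (ballots : Multiset (List (Fin n)))
    (hvalid : ∀ l ∈ ballots, l ≠ [] ∧ l.Nodup)
    (A : Fin n)
    (hML : 2 * (ballots.filter (fun l => l.length = n ∧ l.getLast? = some A)).card >
      ballots.card) :
    ¬ (∀ B : Fin n, B ≠ A → mbcScore n ballots B < mbcScore n ballots A) := by
  have hA := card_mul_mbcScore_le_sum_mbcScore (fun l hl => (hvalid l hl).2) hML.le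
  obtain ⟨B, hBA, hB⟩ := Finset.exists_ne_le_of_card_nsmul_le_sum (f := mbcScore n ballots)
    (by rw [Fintype.card_fin]; omega) (by simpa using hA)
  exact fun h => (h B hBA).not_ge hB
end
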